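/- If E is a finite directed graph and R is an associative unital ring, then the Leavitt path algebra L_R(E), equipped with its canonical ℤ-gradation S = ⊕_{n∈ℤ} S_n, is epsilon-strongly ℤ-graded: for every n ∈ ℤ there exist ε ∈ S_n S_{−n} and ε' ∈ S_{−n} S_n such that ε s = s and s ε' = s for all s ∈ S_n. -/

import Mathlib

namespace LPA

/-- Generators of the Leavitt path algebra: a vertex `v`, a (real) edge `f`,
or a ghost edge `f*`. -/
inductive Gen (V Ed : Type*) : Type _
  | vertex : V → Gen V Ed
  | edge : Ed → Gen V Ed
  | ghost : Ed → Gen V Ed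

/-- The free `R`-ring on the generators, with `R` commuting with the generators. -/
abbrev FreeLPA (R V Ed : Type*) [Ring R] : Type _ := MonoidAlgebra R (FreeMonoid (Gen V Ed))

noncomputable def genF (R : Type*) [Ring R] {V Ed : Type*} (x : Gen V Ed) : FreeLPA R V Ed :=
  MonoidAlgebra.of R (FreeMonoid (Gen V Ed)) (FreeMonoid.of x)

/-- The defining relations of the Leavitt path algebra of the graph with vertices `V`,
edges `Ed`, source map `sf` and range map `rf`. -/
inductive Rel (R : Type*) [Ring R] {V Ed : Type*} (sf rf : Ed → V) :
    FreeLPA R V Ed → FreeLPA R V Ed → Prop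
  | vertex_eq (v : V) :
      Rel R sf rf (genF R (Gen.vertex v) * genF R (Gen.vertex v)) (genF R (Gen.vertex v))
  | vertex_ne {v w : V} (h : v ≠ w) :
      Rel R sf rf (genF R (Gen.vertex v) * genF R (Gen.vertex w)) 0
  | src_edge (f : Ed) :
      Rel R sf rf (genF R (Gen.vertex (sf f)) * genF R (Gen.edge f)) (genF R (Gen.edge f))
  | edge_rng (f : Ed) :
      Rel R sf rf (genF R (Gen.edge f) * genF R (Gen.vertex (rf f))) (genF R (Gen.edge f))
  | rng_ghost (f : Ed) :
      Rel R sf rf (genF R (Gen.vertex (rf f)) * genF R (Gen.ghost f)) (genF R (Gen.ghost f))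
  | ghost_src (f : Ed) :
      Rel R sf rf (genF R (Gen.ghost f) * genF R (Gen.vertex (sf f))) (genF R (Gen.ghost f))
  | ghost_edge_eq (f : Ed) :
      Rel R sf rf (genF R (Gen.ghost f) * genF R (Gen.edge f)) (genF R (Gen.vertex (rf f)))
  | ghost_edge_ne {f f' : Ed} (h : f ≠ f') :
      Rel R sf rf (genF R (Gen.ghost f) * genF R (Gen.edge f')) 0
  | cuntz_krieger (v : V) (h1 : {f : Ed | sf f = v}.Nonempty) (h2 : {f : Ed | sf f = v}.Finite) :
      Rel R sf rf (∑ f ∈ h2.toFinset, genF R (Gen.edge f) * genF R (Gen.ghost f))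
        (genF R (Gen.vertex v))

/-- The Leavitt path algebra `L_R(E)` (as the ambient unital quotient ring in which the
span of the monomials `α β*` is the Leavitt path algebra). -/
abbrev LeavittPathAlgebra (R : Type*) [Ring R] {V Ed : Type*} (sf rf : Ed → V) : Type _ :=
  RingQuot (Rel R sf rf)

noncomputable def gen (R : Type*) [Ring R] {V Ed : Type*} (sf rf : Ed → V) (x : Gen V Ed) :
    LeavittPathAlgebra R sf rf :=
  RingQuot.mkRingHom (Rel R sf rf) (genF R x)

noncomputable def ofR (R : Type*) [Ring R] {V Ed : Type*} (sf rf : Ed → V) (r : R) :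
    LeavittPathAlgebra R sf rf :=
  RingQuot.mkRingHom (Rel R sf rf) (MonoidAlgebra.single (1 : FreeMonoid (Gen V Ed)) r)

/-- Paths in the directed graph. `GPath sf rf u w` are the paths with source `u`
and range `w`; a vertex is a path of length `0`. -/
inductive GPath {V Ed : Type*} (sf rf : Ed → V) : V → V → Type _
  | nil (v : V) : GPath sf rf v v
  | cons (f : Ed) {w : V} (p : GPath sf rf (rf f) w) : GPath sf rf (sf f) w

namespace GPath

def length {V Ed : Type*} {sf rf : Ed → V} : {u w : V} → GPath sf rf u w → ℕ
  | _, _, nil _ => 0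
  | _, _, cons _ p => length p + 1

def edgeList {V Ed : Type*} {sf rf : Ed → V} : {u w : V} → GPath sf rf u w → List Ed
  | _, _, nil _ => []
  | _, _, cons f p => f :: edgeList p

/-- The degree of a path with respect to a degree map `dg : Ed → G`. -/
def degree {V Ed : Type*} {sf rf : Ed → V} {G : Type*} [Group G] (dg : Ed → G) :
    {u w : V} → GPath sf rf u w → G
  | _, _, nil _ => 1
  | _, _, cons f p => dg f * degree dg p

end GPath

/-- The element `α` of `L_R(E)` associated to a path `α` (a vertex if `α` has length 0). -/
noncomputable def realElem (R : Type*) [Ring R] {V Ed : Type*} (sf rf : Ed → V) :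
    {u w : V} → GPath sf rf u w → LeavittPathAlgebra R sf rf
  | _, _, .nil v => gen R sf rf (Gen.vertex v)
  | _, _, .cons f p => gen R sf rf (Gen.edge f) * realElem R sf rf p

/-- The element `α* = α_n* ⋯ α_1*` of `L_R(E)` associated to a path `α`. -/
noncomputable def ghostElem (R : Type*) [Ring R] {V Ed : Type*} (sf rf : Ed → V) :
    {u w : V} → GPath sf rf u w → LeavittPathAlgebra R sf rf
  | _, _, .nil v => gen R sf rf (Gen.vertex v)
  | _, _, .cons f p => ghostElem R sf rf p * gen R sf rf (Gen.ghost f)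

/-- The product `AB` of two additive subgroups of a ring: the additive subgroup
generated by all products `ab`, `a ∈ A`, `b ∈ B`. -/
def sgMul {A : Type*} [NonUnitalRing A] (B C : AddSubgroup A) : AddSubgroup A :=
  AddSubgroup.closure {x | ∃ b ∈ B, ∃ c ∈ C, x = b * c}

/-- The homogeneous component `S_g` of the standard `G`-gradation of `L_R(E)` attached
to the degree map `dg : Ed → G`: the `R`-span of the monomials `α β*` with
`r(α) = r(β)` and `deg α * (deg β)⁻¹ = g`. -/
noncomputable def component (R : Type*) [Ring R] {V Ed : Type*} (sf rf : Ed → V) {G : Type*} [Group G]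
    (dg : Ed → G) (g : G) : AddSubgroup (LeavittPathAlgebra R sf rf) :=
  AddSubgroup.closure
    {x | ∃ (r : R) (u u' w : V) (α : GPath sf rf u w) (β : GPath sf rf u' w),
      α.degree dg * (β.degree dg)⁻¹ = g ∧
      x = ofR R sf rf r * (realElem R sf rf α * ghostElem R sf rf β)}

/-- The homogeneous component `S_n` of the canonical `ℤ`-gradation of `L_R(E)`:
the `R`-span of the monomials `α β*` with `r(α) = r(β)` and `l(α) - l(β) = n`. -/
noncomputable def componentZ (R : Type*) [Ring R] {V Ed : Type*} (sf rf : Ed → V) (n : ℤ) :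
    AddSubgroup (LeavittPathAlgebra R sf rf) :=
  AddSubgroup.closure
    {x | ∃ (r : R) (u u' w : V) (α : GPath sf rf u w) (β : GPath sf rf u' w),
      (α.length : ℤ) - (β.length : ℤ) = n ∧
      x = ofR R sf rf r * (realElem R sf rf α * ghostElem R sf rf β)}

end LPA

/-!
For `n = m ≥ 0` take `ε = ∑ p p*` over the paths `p` of length `m`, and `ε' = ∑ p p*` over the
paths `p` that are minimal, in the prefix order, among those admitting a path `q` into `r(p)` with
`|q| = |p| + m`; then `p p* = (p q*) (q p*) ∈ S_{-m} S_m`. For `n = -m` the two are swapped.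
Both index sets are antichains for the prefix order and `p* q = 0` for incomparable `p`, `q`, so if
`α = p₀ σ` with `p₀` in the index set, only `p₀ p₀*` acts on `α`, and it fixes it; dually for `β*`.
A monomial `α β*` of degree `m` has `|α| ≥ m`, and `β` admits the longer path `α`, so `α` and `β`
have prefixes in the respective index sets.
The second index set is finite because a path with at least `|E⁰|` edges passes through a cycle,
so paths of every length end at its range: minimal paths have at most `|E⁰|` edges.
-/

namespace LPA

section Generators

variable {R : Type*} [Ring R] {V Ed : Type*} {sf rf : Ed → V}

variable (R sf rf) in
noncomputable def vertex (v : V) : LeavittPathAlgebra R sf rf := gen R sf rf (.vertex v)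

variable (R sf rf) in
noncomputable def edge (f : Ed) : LeavittPathAlgebra R sf rf := gen R sf rf (.edge f)

variable (R sf rf) in
noncomputable def ghost (f : Ed) : LeavittPathAlgebra R sf rf := gen R sf rf (.ghost f)

theorem gen_mul_gen (x y : Gen V Ed) :
    gen R sf rf x * gen R sf rf y = RingQuot.mkRingHom (Rel R sf rf) (genF R x * genF R y) :=
  (map_mul _ _ _).symm

theorem vertex_mul_self (v : V) : vertex R sf rf v * vertex R sf rf v = vertex R sf rf v := by
  rw [vertex, gen_mul_gen, RingQuot.mkRingHom_rel (Rel.vertex_eq v)]; rfl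

theorem vertex_mul_vertex_of_ne {v w : V} (h : v ≠ w) :
    vertex R sf rf v * vertex R sf rf w = 0 := by
  rw [vertex, vertex, gen_mul_gen, RingQuot.mkRingHom_rel (Rel.vertex_ne h), map_zero]

theorem vertex_mul_edge (f : Ed) : vertex R sf rf (sf f) * edge R sf rf f = edge R sf rf f := by
  rw [vertex, edge, gen_mul_gen, RingQuot.mkRingHom_rel (Rel.src_edge f)]; rfl

theorem ghost_mul_vertex (f : Ed) : ghost R sf rf f * vertex R sf rf (sf f) = ghost R sf rf f := by
  rw [vertex, ghost, gen_mul_gen, RingQuot.mkRingHom_rel (Rel.ghost_src f)]; rfl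

theorem ghost_mul_edge_self (f : Ed) :
    ghost R sf rf f * edge R sf rf f = vertex R sf rf (rf f) := by
  rw [vertex, ghost, edge, gen_mul_gen, RingQuot.mkRingHom_rel (Rel.ghost_edge_eq f)]; rfl

theorem ghost_mul_edge_of_ne {f f' : Ed} (h : f ≠ f') :
    ghost R sf rf f * edge R sf rf f' = 0 := by
  rw [ghost, edge, gen_mul_gen, RingQuot.mkRingHom_rel (Rel.ghost_edge_ne h), map_zero]

theorem vertex_mul_edge_of_ne {f : Ed} {v : V} (h : v ≠ sf f) :
    vertex R sf rf v * edge R sf rf f = 0 := by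
  rw [← vertex_mul_edge f, ← mul_assoc, vertex_mul_vertex_of_ne h, zero_mul]

theorem ghost_mul_vertex_of_ne {f : Ed} {v : V} (h : v ≠ sf f) :
    ghost R sf rf f * vertex R sf rf v = 0 := by
  rw [← ghost_mul_vertex f, mul_assoc, vertex_mul_vertex_of_ne h.symm, mul_zero]

theorem commute_ofR_gen (r : R) (x : Gen V Ed) : Commute (ofR R sf rf r) (gen R sf rf x) := by
  simp only [Commute, SemiconjBy, ofR, gen, genF, ← map_mul, MonoidAlgebra.of_apply,
    MonoidAlgebra.single_mul_single, one_mul, mul_one]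

theorem ofR_one : ofR R sf rf 1 = 1 := by
  rw [ofR, ← MonoidAlgebra.one_def, map_one]

end Generators

namespace GPath

variable {V Ed : Type*} {sf rf : Ed → V}

def app : {u v w : V} → GPath sf rf u v → GPath sf rf v w → GPath sf rf u w
  | _, _, _, nil _, q => q
  | _, _, _, cons f p, q => cons f (p.app q)

def vertices : {u w : V} → GPath sf rf u w → List V
  | _, _, nil v => [v]
  | _, _, cons f p => sf f :: p.vertices

@[simp] theorem length_nil (v : V) : (nil (sf := sf) (rf := rf) v).length = 0 := rfl

@[simp] theorem length_cons (f : Ed) {w : V} (p : GPath sf rf (rf f) w) :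
    (cons f p).length = p.length + 1 := rfl

@[simp] theorem edgeList_nil (v : V) : (nil (sf := sf) (rf := rf) v).edgeList = [] := rfl

@[simp] theorem edgeList_cons (f : Ed) {w : V} (p : GPath sf rf (rf f) w) :
    (cons f p).edgeList = f :: p.edgeList := rfl

@[simp] theorem nil_app {v w : V} (q : GPath sf rf v w) : (nil v).app q = q := rfl

@[simp] theorem cons_app (f : Ed) {v w : V} (p : GPath sf rf (rf f) v) (q : GPath sf rf v w) :
    (cons f p).app q = cons f (p.app q) := rfl

@[simp] theorem length_app {u v w : V} (p : GPath sf rf u v) (q : GPath sf rf v w) :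
    (p.app q).length = p.length + q.length := by
  induction p with
  | nil => simp
  | cons f p ih => simp [ih]; omega

@[simp] theorem edgeList_app {u v w : V} (p : GPath sf rf u v) (q : GPath sf rf v w) :
    (p.app q).edgeList = p.edgeList ++ q.edgeList := by
  induction p with
  | nil => simp
  | cons f p ih => simp [ih]

@[simp] theorem length_edgeList {u w : V} (p : GPath sf rf u w) : p.edgeList.length = p.length := by
  induction p with
  | nil => simp
  | cons f p ih => simp [ih]

theorem length_vertices {u w : V} (p : GPath sf rf u w) : p.vertices.length = p.length + 1 := by
  induction p with
  | nil => rfl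
  | cons f p ih => simp [vertices, ih]

theorem nonempty_of_mem_vertices {u w v : V} (p : GPath sf rf u w) (hv : v ∈ p.vertices) :
    Nonempty (GPath sf rf u v) ∧ Nonempty (GPath sf rf v w) := by
  induction p with
  | nil u =>
    obtain rfl : v = u := List.mem_singleton.mp hv
    exact ⟨⟨nil v⟩, ⟨nil v⟩⟩
  | cons f p ih =>
    rcases List.mem_cons.mp hv with rfl | hv
    · exact ⟨⟨nil _⟩, ⟨cons f p⟩⟩
    · obtain ⟨⟨a⟩, b⟩ := ih hv
      exact ⟨⟨cons f a⟩, b⟩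

theorem exists_eq_app_of_le_length {u w : V} (p : GPath sf rf u w) {k : ℕ} (hk : k ≤ p.length) :
    ∃ (v : V) (p₁ : GPath sf rf u v) (p₂ : GPath sf rf v w), p₁.length = k ∧ p = p₁.app p₂ := by
  induction p generalizing k with
  | nil v => exact ⟨v, nil v, nil v, by simp at hk ⊢; omega, rfl⟩
  | cons f p ih =>
    cases k with
    | zero => exact ⟨_, nil _, cons f p, rfl, rfl⟩
    | succ k =>
      obtain ⟨v, p₁, p₂, hlen, rfl⟩ := ih (by simpa using hk)
      exact ⟨v, cons f p₁, p₂, by simp [hlen], rfl⟩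

end GPath

structure AnyPath {V Ed : Type*} (sf rf : Ed → V) where
  src : V
  tgt : V
  path : GPath sf rf src tgt

abbrev GPath.toAnyPath {V Ed : Type*} {sf rf : Ed → V} {u w : V} (p : GPath sf rf u w) :
    AnyPath sf rf :=
  ⟨u, w, p⟩

namespace AnyPath

variable {V Ed : Type*} {sf rf : Ed → V}

theorem ext_edgeList {p q : AnyPath sf rf} (hsrc : p.src = q.src)
    (hedges : p.path.edgeList = q.path.edgeList) : p = q := by
  obtain ⟨u, w, p⟩ := p
  obtain ⟨u', w', q⟩ := q
  dsimp only at hsrc hedges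
  induction p generalizing u' w' with
  | nil v =>
    cases q with
    | nil => subst hsrc; rfl
    | cons g q => simp at hedges
  | cons f p ih =>
    cases q with
    | nil => simp at hedges
    | cons g q =>
      obtain ⟨rfl, hedges⟩ := List.cons_eq_cons.mp hedges
      cases ih _ _ q rfl hedges
      rfl

instance : PartialOrder (AnyPath sf rf) where
  le p q := p.src = q.src ∧ p.path.edgeList <+: q.path.edgeList
  le_refl p := ⟨rfl, List.prefix_refl _⟩
  le_trans _ _ _ h₁ h₂ := ⟨h₁.1.trans h₂.1, h₁.2.trans h₂.2⟩
  le_antisymm _ _ h₁ h₂ :=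
    ext_edgeList h₁.1 (h₁.2.eq_of_length (le_antisymm h₁.2.length_le h₂.2.length_le))

theorem le_def {p q : AnyPath sf rf} :
    p ≤ q ↔ p.src = q.src ∧ p.path.edgeList <+: q.path.edgeList :=
  Iff.rfl

theorem le_or_le_of_le {p q r : AnyPath sf rf} (hp : p ≤ r) (hq : q ≤ r) : p ≤ q ∨ q ≤ p :=
  (List.prefix_or_prefix_of_prefix hp.2 hq.2).imp (⟨hp.1.trans hq.1.symm, ·⟩)
    (⟨hq.1.trans hp.1.symm, ·⟩)

theorem strictMono_length : StrictMono fun p : AnyPath sf rf => p.path.length := by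
  intro p q hpq
  obtain ⟨hsrc, hpre⟩ := le_def.mp hpq.le
  have hle : p.path.length ≤ q.path.length := by simpa using hpre.length_le
  refine lt_of_le_of_ne hle fun heq => hpq.not_ge ⟨hsrc.symm, ?_⟩
  rw [hpre.eq_of_length (by simpa using heq)]

instance : WellFoundedLT (AnyPath sf rf) := strictMono_length.wellFoundedLT

theorem toAnyPath_le_app {u v w : V} (p : GPath sf rf u v) (σ : GPath sf rf v w) :
    p.toAnyPath ≤ (p.app σ).toAnyPath :=
  ⟨rfl, by simp [List.prefix_append]⟩

theorem toAnyPath_cons_le_cons {f : Ed} {w w' : V} {p : GPath sf rf (rf f) w}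
    {q : GPath sf rf (rf f) w'} :
    (GPath.cons f p).toAnyPath ≤ (GPath.cons f q).toAnyPath ↔ p.toAnyPath ≤ q.toAnyPath := by
  simp [le_def, List.cons_prefix_cons]

theorem exists_le_length_eq (q : AnyPath sf rf) {k : ℕ} (hk : k ≤ q.path.length) :
    ∃ p ≤ q, p.path.length = k := by
  obtain ⟨u, w, q⟩ := q
  obtain ⟨v, p₁, p₂, hlen, rfl⟩ := q.exists_eq_app_of_le_length hk
  exact ⟨p₁.toAnyPath, toAnyPath_le_app p₁ p₂, hlen⟩

end AnyPath

theorem GPath.exists_eq_app_of_le {V Ed : Type*} {sf rf : Ed → V} {u v w : V}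
    (p : GPath sf rf u v) (q : GPath sf rf u w) (h : p.toAnyPath ≤ q.toAnyPath) :
    ∃ σ : GPath sf rf v w, q = p.app σ := by
  obtain ⟨v', q₁, σ, hlen, rfl⟩ :=
    q.exists_eq_app_of_le_length (k := p.length) (by simpa using h.2.length_le)
  have hq₁ : q₁.toAnyPath = p.toAnyPath := by
    refine AnyPath.ext_edgeList rfl ?_
    rw [List.prefix_iff_eq_take.mp h.2]
    simp [hlen]
  cases hq₁
  exact ⟨σ, rfl⟩

section PathElements

variable {R : Type*} [Ring R] {V Ed : Type*} {sf rf : Ed → V}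

@[simp] theorem realElem_nil (v : V) : realElem R sf rf (.nil v) = vertex R sf rf v := rfl

@[simp] theorem realElem_cons (f : Ed) {w : V} (p : GPath sf rf (rf f) w) :
    realElem R sf rf (.cons f p) = edge R sf rf f * realElem R sf rf p := rfl

@[simp] theorem ghostElem_nil (v : V) : ghostElem R sf rf (.nil v) = vertex R sf rf v := rfl

@[simp] theorem ghostElem_cons (f : Ed) {w : V} (p : GPath sf rf (rf f) w) :
    ghostElem R sf rf (.cons f p) = ghostElem R sf rf p * ghost R sf rf f := rfl

theorem vertex_mul_realElem {u w : V} (p : GPath sf rf u w) :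
    vertex R sf rf u * realElem R sf rf p = realElem R sf rf p := by
  cases p with
  | nil => exact vertex_mul_self _
  | cons f p => rw [realElem_cons, ← mul_assoc, vertex_mul_edge]

theorem vertex_mul_realElem_of_ne {u w v : V} (p : GPath sf rf u w) (h : v ≠ u) :
    vertex R sf rf v * realElem R sf rf p = 0 := by
  cases p with
  | nil => exact vertex_mul_vertex_of_ne h
  | cons f p => rw [realElem_cons, ← mul_assoc, vertex_mul_edge_of_ne h, zero_mul]

theorem realElem_mul_vertex {u w : V} (p : GPath sf rf u w) :
    realElem R sf rf p * vertex R sf rf w = realElem R sf rf p := by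
  induction p with
  | nil => exact vertex_mul_self _
  | cons f p ih => rw [realElem_cons, mul_assoc, ih]

theorem ghostElem_mul_vertex {u w : V} (p : GPath sf rf u w) :
    ghostElem R sf rf p * vertex R sf rf u = ghostElem R sf rf p := by
  cases p with
  | nil => exact vertex_mul_self _
  | cons f p => rw [ghostElem_cons, mul_assoc, ghost_mul_vertex]

theorem ghostElem_mul_vertex_of_ne {u w v : V} (p : GPath sf rf u w) (h : v ≠ u) :
    ghostElem R sf rf p * vertex R sf rf v = 0 := by
  cases p with
  | nil => exact vertex_mul_vertex_of_ne h.symm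
  | cons f p => rw [ghostElem_cons, mul_assoc, ghost_mul_vertex_of_ne h, mul_zero]

theorem vertex_mul_ghostElem {u w : V} (p : GPath sf rf u w) :
    vertex R sf rf w * ghostElem R sf rf p = ghostElem R sf rf p := by
  induction p with
  | nil => exact vertex_mul_self _
  | cons f p ih => rw [ghostElem_cons, ← mul_assoc, ih]

theorem ghostElem_cons_mul_realElem_cons (f : Ed) {w w' : V} (p : GPath sf rf (rf f) w)
    (q : GPath sf rf (rf f) w') :
    ghostElem R sf rf (.cons f p) * realElem R sf rf (.cons f q) =
      ghostElem R sf rf p * realElem R sf rf q := by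
  rw [ghostElem_cons, realElem_cons, mul_assoc, ← mul_assoc (ghost R sf rf f),
    ghost_mul_edge_self, vertex_mul_realElem]

theorem ghostElem_mul_realElem_self {u w : V} (p : GPath sf rf u w) :
    ghostElem R sf rf p * realElem R sf rf p = vertex R sf rf w := by
  induction p with
  | nil => exact vertex_mul_self _
  | cons f p ih => rw [ghostElem_cons_mul_realElem_cons, ih]

theorem realElem_app {u v w : V} (p : GPath sf rf u v) (q : GPath sf rf v w) :
    realElem R sf rf (p.app q) = realElem R sf rf p * realElem R sf rf q := by
  induction p with
  | nil => rw [GPath.nil_app, realElem_nil, vertex_mul_realElem]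
  | cons f p ih => rw [GPath.cons_app, realElem_cons, realElem_cons, ih, mul_assoc]

theorem ghostElem_app {u v w : V} (p : GPath sf rf u v) (q : GPath sf rf v w) :
    ghostElem R sf rf (p.app q) = ghostElem R sf rf q * ghostElem R sf rf p := by
  induction p with
  | nil => rw [GPath.nil_app, ghostElem_nil, ghostElem_mul_vertex]
  | cons f p ih => rw [GPath.cons_app, ghostElem_cons, ghostElem_cons, ih, mul_assoc]

theorem commute_ofR_realElem (r : R) {u w : V} (p : GPath sf rf u w) :
    Commute (ofR R sf rf r) (realElem R sf rf p) := by
  induction p with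
  | nil => exact commute_ofR_gen r _
  | cons f p ih => exact (commute_ofR_gen r _).mul_right ih

theorem commute_ofR_ghostElem (r : R) {u w : V} (p : GPath sf rf u w) :
    Commute (ofR R sf rf r) (ghostElem R sf rf p) := by
  induction p with
  | nil => exact commute_ofR_gen r _
  | cons f p ih => exact ih.mul_right (commute_ofR_gen r _)

theorem ghostElem_mul_realElem_eq_zero {p q : AnyPath sf rf} (hpq : ¬p ≤ q) (hqp : ¬q ≤ p) :
    ghostElem R sf rf p.path * realElem R sf rf q.path = 0 := by
  obtain ⟨u, w, p⟩ := p
  obtain ⟨u', w', q⟩ := q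
  induction p generalizing u' w' with
  | nil v =>
    have hv : v ≠ u' := fun hv => hpq ⟨hv, List.nil_prefix⟩
    exact vertex_mul_realElem_of_ne q hv
  | cons f p ih =>
    cases q with
    | nil => exact ghostElem_mul_vertex_of_ne _ fun hv => hqp ⟨hv, List.nil_prefix⟩
    | cons g q =>
      by_cases hfg : f = g
      · subst hfg
        rw [ghostElem_cons_mul_realElem_cons]
        exact ih _ _ q (mt AnyPath.toAnyPath_cons_le_cons.mpr hpq)
          (mt AnyPath.toAnyPath_cons_le_cons.mpr hqp)
      · rw [ghostElem_cons, realElem_cons, mul_assoc, ← mul_assoc (ghost R sf rf f),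
          ghost_mul_edge_of_ne hfg, zero_mul, mul_zero]

theorem AnyPath.not_le_and_not_le_of_isAntichain {P : Set (AnyPath sf rf)}
    (hP : IsAntichain (· ≤ ·) P) {p p₀ a : AnyPath sf rf} (hp : p ∈ P) (hp₀ : p₀ ∈ P)
    (hne : p ≠ p₀) (hp₀a : p₀ ≤ a) : ¬p ≤ a ∧ ¬a ≤ p := by
  refine ⟨fun hpa => ?_, fun hap => hne (hP.eq hp₀ hp (hp₀a.trans hap)).symm⟩
  rcases AnyPath.le_or_le_of_le hpa hp₀a with h | h
  · exact hne (hP.eq hp hp₀ h)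
  · exact hne (hP.eq hp₀ hp h).symm

variable (R sf rf) in
noncomputable def idempotentSum (P : Finset (AnyPath sf rf)) : LeavittPathAlgebra R sf rf :=
  ∑ p ∈ P, realElem R sf rf p.path * ghostElem R sf rf p.path

theorem commute_ofR_idempotentSum (r : R) (P : Finset (AnyPath sf rf)) :
    Commute (ofR R sf rf r) (idempotentSum R sf rf P) :=
  Commute.sum_right _ _ _ fun p _ =>
    (commute_ofR_realElem r p.path).mul_right (commute_ofR_ghostElem r p.path)

theorem idempotentSum_mul_realElem {P : Finset (AnyPath sf rf)}
    (hP : IsAntichain (· ≤ ·) (P : Set (AnyPath sf rf))) {u w : V} (α : GPath sf rf u w)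
    {p₀ : AnyPath sf rf} (hp₀ : p₀ ∈ P) (hp₀α : p₀ ≤ α.toAnyPath) :
    idempotentSum R sf rf P * realElem R sf rf α = realElem R sf rf α := by
  rw [idempotentSum, Finset.sum_mul, Finset.sum_eq_single_of_mem p₀ hp₀]
  · obtain ⟨u₀, v, p₀⟩ := p₀
    obtain rfl : u₀ = u := hp₀α.1
    obtain ⟨σ, rfl⟩ := p₀.exists_eq_app_of_le α hp₀α
    rw [mul_assoc, realElem_app, ← mul_assoc (ghostElem R sf rf p₀), ghostElem_mul_realElem_self,
      vertex_mul_realElem]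
  · intro p hp hne
    obtain ⟨hpα, hαp⟩ := AnyPath.not_le_and_not_le_of_isAntichain hP hp hp₀ hne hp₀α
    rw [mul_assoc, ghostElem_mul_realElem_eq_zero (q := α.toAnyPath) hpα hαp, mul_zero]

theorem ghostElem_mul_idempotentSum {P : Finset (AnyPath sf rf)}
    (hP : IsAntichain (· ≤ ·) (P : Set (AnyPath sf rf))) {u w : V} (β : GPath sf rf u w)
    {p₀ : AnyPath sf rf} (hp₀ : p₀ ∈ P) (hp₀β : p₀ ≤ β.toAnyPath) :
    ghostElem R sf rf β * idempotentSum R sf rf P = ghostElem R sf rf β := by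
  rw [idempotentSum, Finset.mul_sum, Finset.sum_eq_single_of_mem p₀ hp₀]
  · obtain ⟨u₀, v, p₀⟩ := p₀
    obtain rfl : u₀ = u := hp₀β.1
    obtain ⟨σ, rfl⟩ := p₀.exists_eq_app_of_le β hp₀β
    rw [ghostElem_app, mul_assoc, ← mul_assoc (ghostElem R sf rf p₀),
      ghostElem_mul_realElem_self, vertex_mul_ghostElem]
  · intro p hp hne
    obtain ⟨hpβ, hβp⟩ := AnyPath.not_le_and_not_le_of_isAntichain hP hp hp₀ hne hp₀β
    rw [← mul_assoc, ghostElem_mul_realElem_eq_zero (p := β.toAnyPath) hβp hpβ, zero_mul]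

end PathElements

section Components

variable {R : Type*} [Ring R] {V Ed : Type*} {sf rf : Ed → V}

theorem mul_mem_sgMul {A : Type*} [NonUnitalRing A] {B C : AddSubgroup A} {b c : A}
    (hb : b ∈ B) (hc : c ∈ C) : b * c ∈ sgMul B C :=
  AddSubgroup.subset_closure ⟨b, hb, c, hc, rfl⟩

theorem realElem_mul_ghostElem_mem_componentZ {n : ℤ} {u u' w : V} (α : GPath sf rf u w)
    (β : GPath sf rf u' w) (h : (α.length : ℤ) - β.length = n) :
    realElem R sf rf α * ghostElem R sf rf β ∈ componentZ R sf rf n := by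
  have h₁ : ofR R sf rf 1 * (realElem R sf rf α * ghostElem R sf rf β) ∈ componentZ R sf rf n :=
    AddSubgroup.subset_closure ⟨1, u, u', w, α, β, h, rfl⟩
  rwa [ofR_one, one_mul] at h₁

theorem realElem_mem_componentZ {u w : V} (p : GPath sf rf u w) :
    realElem R sf rf p ∈ componentZ R sf rf p.length := by
  simpa only [ghostElem_nil, realElem_mul_vertex] using
    realElem_mul_ghostElem_mem_componentZ (R := R) p (.nil w) (by simp)

theorem ghostElem_mem_componentZ {u w : V} (p : GPath sf rf u w) :
    ghostElem R sf rf p ∈ componentZ R sf rf (-p.length) := by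
  simpa only [realElem_nil, vertex_mul_ghostElem] using
    realElem_mul_ghostElem_mem_componentZ (R := R) (.nil w) p (by simp)

theorem mul_eq_right_of_mem_componentZ {n : ℤ} {ε : LeavittPathAlgebra R sf rf}
    (hε : ∀ r, Commute (ofR R sf rf r) ε)
    (h : ∀ {u u' w : V} (α : GPath sf rf u w) (β : GPath sf rf u' w),
      (α.length : ℤ) - β.length = n → ε * realElem R sf rf α = realElem R sf rf α)
    {s : LeavittPathAlgebra R sf rf} (hs : s ∈ componentZ R sf rf n) : ε * s = s := by
  induction hs using AddSubgroup.closure_induction with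
  | mem x hx =>
    obtain ⟨r, u, u', w, α, β, hn, rfl⟩ := hx
    rw [(hε r).symm.left_comm, ← mul_assoc ε, h α β hn]
  | zero => exact mul_zero ε
  | add x y _ _ hx hy => rw [mul_add, hx, hy]
  | neg x _ hx => exact (mul_neg ε x).trans (congrArg Neg.neg hx)

theorem mul_eq_left_of_mem_componentZ {n : ℤ} {ε : LeavittPathAlgebra R sf rf}
    (h : ∀ {u u' w : V} (α : GPath sf rf u w) (β : GPath sf rf u' w),
      (α.length : ℤ) - β.length = n → ghostElem R sf rf β * ε = ghostElem R sf rf β)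
    {s : LeavittPathAlgebra R sf rf} (hs : s ∈ componentZ R sf rf n) : s * ε = s := by
  induction hs using AddSubgroup.closure_induction with
  | mem x hx =>
    obtain ⟨r, u, u', w, α, β, hn, rfl⟩ := hx
    rw [mul_assoc, mul_assoc, h α β hn]
  | zero => exact zero_mul ε
  | add x y _ _ hx hy => rw [add_mul, hx, hy]
  | neg x _ hx => exact (neg_mul x ε).trans (congrArg Neg.neg hx)

end Components

section PathsOfLength

variable {V Ed : Type*} [Finite V] [Finite Ed] {sf rf : Ed → V}

theorem AnyPath.finite_setOf_length_le (K : ℕ) :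
    {p : AnyPath sf rf | p.path.length ≤ K}.Finite := by
  have hinj : Function.Injective fun p : AnyPath sf rf => (p.src, p.path.edgeList) :=
    fun _ _ h => AnyPath.ext_edgeList (congrArg Prod.fst h) (congrArg Prod.snd h)
  refine ((Set.finite_univ.prod (List.finite_length_le Ed K)).preimage hinj.injOn).subset ?_
  intro p hp
  exact ⟨trivial, by simpa using hp⟩

variable (sf rf) in
noncomputable def pathsOfLength (m : ℕ) : Finset (AnyPath sf rf) :=
  ((AnyPath.finite_setOf_length_le m).subset fun _ hp => le_of_eq hp :
    {p : AnyPath sf rf | p.path.length = m}.Finite).toFinset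

theorem mem_pathsOfLength {m : ℕ} {p : AnyPath sf rf} :
    p ∈ pathsOfLength sf rf m ↔ p.path.length = m := by
  simp [pathsOfLength]

theorem isAntichain_pathsOfLength (m : ℕ) :
    IsAntichain (· ≤ ·) (pathsOfLength sf rf m : Set (AnyPath sf rf)) := by
  intro p hp q hq hne hle
  rw [Finset.mem_coe, mem_pathsOfLength] at hp hq
  exact (AnyPath.strictMono_length (lt_of_le_of_ne hle hne)).ne (hp.trans hq.symm)

end PathsOfLength

section PathsTo

variable {V Ed : Type*} {sf rf : Ed → V}

variable (sf rf) in
def HasPathTo (L : ℕ) (v : V) : Prop :=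
  ∃ (u : V) (q : GPath sf rf u v), q.length = L

theorem HasPathTo.of_succ {L : ℕ} {v : V} (h : HasPathTo sf rf (L + 1) v) :
    HasPathTo sf rf L v := by
  obtain ⟨u, q, hq⟩ := h
  cases q with
  | nil => simp at hq
  | cons f q => exact ⟨_, q, by simpa using hq⟩

theorem HasPathTo.mono {L k : ℕ} {v : V} (h : HasPathTo sf rf L v) (hk : k ≤ L) :
    HasPathTo sf rf k v := by
  obtain ⟨d, rfl⟩ := Nat.exists_eq_add_of_le hk
  induction d with
  | zero => exact h
  | succ d ih => exact ih h.of_succ (by omega)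

theorem HasPathTo.app {L : ℕ} {v w : V} (h : HasPathTo sf rf L v) (p : GPath sf rf v w) :
    HasPathTo sf rf (L + p.length) w := by
  obtain ⟨u, q, rfl⟩ := h
  exact ⟨u, q.app p, GPath.length_app q p⟩

theorem hasPathTo_of_cycle {v : V} (c : GPath sf rf v v) (hc : 0 < c.length) (L : ℕ) :
    HasPathTo sf rf L v := by
  induction L with
  | zero => exact ⟨v, .nil v, rfl⟩
  | succ L ih => exact (ih.app c).mono (by omega)

/-- A repeated vertex would lie on a cycle, from which arbitrarily long paths reach `w`. -/
theorem GPath.nodup_vertices {u w : V} (p : GPath sf rf u w)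
    (hw : ¬∀ L, HasPathTo sf rf L w) : p.vertices.Nodup := by
  induction p with
  | nil => exact List.nodup_singleton _
  | cons f p ih =>
    refine List.nodup_cons.mpr ⟨fun hmem => hw fun L => ?_, ih hw⟩
    obtain ⟨⟨a⟩, ⟨b⟩⟩ := p.nonempty_of_mem_vertices hmem
    exact ((hasPathTo_of_cycle (.cons f a) (by simp) L).app b).mono (by omega)

theorem hasPathTo_of_card_le_length [Finite V] {u w : V} (p : GPath sf rf u w)
    (hp : Nat.card V ≤ p.length) (L : ℕ) : HasPathTo sf rf L w := by
  revert L
  by_contra hw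
  have : Fintype V := Fintype.ofFinite V
  have hcard := (p.nodup_vertices hw).length_le_card
  rw [GPath.length_vertices, ← Nat.card_eq_fintype_card] at hcard
  omega

end PathsTo

section MinimalCoterminal

variable {V Ed : Type*} {sf rf : Ed → V}

def AnyPath.HasCoterminal (m : ℕ) (p : AnyPath sf rf) : Prop :=
  HasPathTo sf rf (p.path.length + m) p.tgt

theorem AnyPath.length_le_card_of_minimal [Finite V] {m : ℕ} {p : AnyPath sf rf}
    (hp : Minimal (HasCoterminal m) p) : p.path.length ≤ Nat.card V := by
  by_contra! hlt
  obtain ⟨q, hqp, hq⟩ := p.exists_le_length_eq hlt.le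
  have hpq := hp.le_of_le (hasPathTo_of_card_le_length q.path hq.ge _) hqp
  have := strictMono_length.monotone hpq
  omega

variable [Finite V] [Finite Ed]

variable (sf rf) in
noncomputable def minimalCoterminal (m : ℕ) : Finset (AnyPath sf rf) :=
  ((AnyPath.finite_setOf_length_le (Nat.card V)).subset
    fun _ hp => AnyPath.length_le_card_of_minimal hp :
    {p : AnyPath sf rf | Minimal (AnyPath.HasCoterminal m) p}.Finite).toFinset

theorem mem_minimalCoterminal {m : ℕ} {p : AnyPath sf rf} :
    p ∈ minimalCoterminal sf rf m ↔ Minimal (AnyPath.HasCoterminal m) p := by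
  simp [minimalCoterminal]

theorem isAntichain_minimalCoterminal (m : ℕ) :
    IsAntichain (· ≤ ·) (minimalCoterminal sf rf m : Set (AnyPath sf rf)) := by
  simpa [minimalCoterminal] using
    setOfPred_minimal_antichain (AnyPath.HasCoterminal (sf := sf) (rf := rf) m)

theorem exists_mem_minimalCoterminal_le {m : ℕ} {p : AnyPath sf rf} (hp : p.HasCoterminal m) :
    ∃ p₀ ∈ minimalCoterminal sf rf m, p₀ ≤ p :=
  let ⟨p₀, hle, hmin⟩ := exists_minimal_le_of_wellFoundedLT _ p hp
  ⟨p₀, mem_minimalCoterminal.mpr hmin, hle⟩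

end MinimalCoterminal

section LocalUnits

variable {R : Type*} [Ring R] {V Ed : Type*} [Finite V] [Finite Ed] {sf rf : Ed → V}

theorem idempotentSum_pathsOfLength_mem_sgMul (m : ℕ) :
    idempotentSum R sf rf (pathsOfLength sf rf m) ∈
      sgMul (componentZ R sf rf m) (componentZ R sf rf (-m)) := by
  refine AddSubgroup.sum_mem _ fun p hp => ?_
  rw [← mem_pathsOfLength.mp hp]
  exact mul_mem_sgMul (realElem_mem_componentZ p.path) (ghostElem_mem_componentZ p.path)

theorem idempotentSum_minimalCoterminal_mem_sgMul (m : ℕ) :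
    idempotentSum R sf rf (minimalCoterminal sf rf m) ∈
      sgMul (componentZ R sf rf (-m)) (componentZ R sf rf m) := by
  refine AddSubgroup.sum_mem _ fun p hp => ?_
  obtain ⟨u, q, hq⟩ := (mem_minimalCoterminal.mp hp).prop
  have hfactor : realElem R sf rf p.path * ghostElem R sf rf p.path =
      (realElem R sf rf p.path * ghostElem R sf rf q) *
        (realElem R sf rf q * ghostElem R sf rf p.path) := by
    rw [mul_assoc, ← mul_assoc (ghostElem R sf rf q), ghostElem_mul_realElem_self,
      vertex_mul_ghostElem]
  rw [hfactor]
  exact mul_mem_sgMul (realElem_mul_ghostElem_mem_componentZ _ _ (by omega))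
    (realElem_mul_ghostElem_mem_componentZ _ _ (by omega))

theorem idempotentSum_pathsOfLength_mul {m : ℕ} {s : LeavittPathAlgebra R sf rf}
    (hs : s ∈ componentZ R sf rf m) : idempotentSum R sf rf (pathsOfLength sf rf m) * s = s := by
  refine mul_eq_right_of_mem_componentZ (commute_ofR_idempotentSum · _) (fun α β hn => ?_) hs
  obtain ⟨p₀, hp₀α, hp₀⟩ := α.toAnyPath.exists_le_length_eq (show m ≤ α.length by omega)
  exact idempotentSum_mul_realElem (isAntichain_pathsOfLength m) α
    (mem_pathsOfLength.mpr hp₀) hp₀α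

theorem mul_idempotentSum_pathsOfLength {m : ℕ} {s : LeavittPathAlgebra R sf rf}
    (hs : s ∈ componentZ R sf rf (-m)) : s * idempotentSum R sf rf (pathsOfLength sf rf m) = s := by
  refine mul_eq_left_of_mem_componentZ (fun α β hn => ?_) hs
  obtain ⟨p₀, hp₀β, hp₀⟩ := β.toAnyPath.exists_le_length_eq (show m ≤ β.length by omega)
  exact ghostElem_mul_idempotentSum (isAntichain_pathsOfLength m) β
    (mem_pathsOfLength.mpr hp₀) hp₀β

theorem idempotentSum_minimalCoterminal_mul {m : ℕ} {s : LeavittPathAlgebra R sf rf}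
    (hs : s ∈ componentZ R sf rf (-m)) :
    idempotentSum R sf rf (minimalCoterminal sf rf m) * s = s := by
  refine mul_eq_right_of_mem_componentZ (commute_ofR_idempotentSum · _) (fun α β hn => ?_) hs
  obtain ⟨p₀, hp₀, hp₀α⟩ :=
    exists_mem_minimalCoterminal_le (p := α.toAnyPath) ⟨_, β, show β.length = α.length + m by omega⟩
  exact idempotentSum_mul_realElem (isAntichain_minimalCoterminal m) α hp₀ hp₀α

theorem mul_idempotentSum_minimalCoterminal {m : ℕ} {s : LeavittPathAlgebra R sf rf}
    (hs : s ∈ componentZ R sf rf m) :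
    s * idempotentSum R sf rf (minimalCoterminal sf rf m) = s := by
  refine mul_eq_left_of_mem_componentZ (fun α β hn => ?_) hs
  obtain ⟨p₀, hp₀, hp₀β⟩ :=
    exists_mem_minimalCoterminal_le (p := β.toAnyPath) ⟨_, α, show α.length = β.length + m by omega⟩
  exact ghostElem_mul_idempotentSum (isAntichain_minimalCoterminal m) β hp₀ hp₀β

end LocalUnits

end LPA

open LPA in
/-- If `E` is a finite directed graph and `R` an associative unital ring,
then `L_R(E)`, with its canonical `ℤ`-gradation, is epsilon-strongly `ℤ`-graded: for every
`n ∈ ℤ` there exist `ε ∈ S_n S_{-n}` and `ε' ∈ S_{-n} S_n` with `ε s = s` and `s ε' = s`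
for all `s ∈ S_n`. -/
theorem leavitt_finite_epsilonStrongly_int (R : Type*) [Ring R] {V Ed : Type*}
    [Finite V] [Finite Ed] (sf rf : Ed → V) :
    ∀ n : ℤ, ∃ ε ∈ sgMul (componentZ R sf rf n) (componentZ R sf rf (-n)),
      ∃ ε' ∈ sgMul (componentZ R sf rf (-n)) (componentZ R sf rf n),
        ∀ s ∈ componentZ R sf rf n, ε * s = s ∧ s * ε' = s := by
  intro n
  obtain ⟨m, rfl | rfl⟩ := Int.eq_nat_or_neg n
  · exact ⟨_, idempotentSum_pathsOfLength_mem_sgMul m, _,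
      idempotentSum_minimalCoterminal_mem_sgMul m,
      fun s hs => ⟨idempotentSum_pathsOfLength_mul hs, mul_idempotentSum_minimalCoterminal hs⟩⟩
  · rw [neg_neg]
    exact ⟨_, idempotentSum_minimalCoterminal_mem_sgMul m, _,
      idempotentSum_pathsOfLength_mem_sgMul m,
      fun s hs => ⟨idempotentSum_minimalCoterminal_mul hs, mul_idempotentSum_pathsOfLength hs⟩⟩
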